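/- For a closed set A ⊆ ℝ^d and r > 0, the r-convex hull satisfies C_r(A) = (A ⊕ rB) ⊖ rB, where B is the open unit ball; i.e., the intersection of complements of all open balls of radius r missing A equals the morphological closing of A by rB. -/

import Mathlib

/-!
A point `x` lies in `C_r(A)` exactly when every open `r`-ball containing `x` meets `A`.
Since `x ∈ B_r(y)` iff `y ∈ B_r(x)`, and `B_r(y)` meets `A` iff `y ∈ A ⊕ rB`, this says
`B_r(x) ⊆ A ⊕ rB`, which is the definition of `x ∈ (A ⊕ rB) ⊖ rB`.
-/

open Set Metric

/-- Minkowski sum. -/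
def mSum {d : ℕ} (C D : Set (EuclideanSpace ℝ (Fin d))) : Set (EuclideanSpace ℝ (Fin d)) :=
  Set.image2 (· + ·) C D

/-- Minkowski erosion. -/
def mErode {d : ℕ} (A C : Set (EuclideanSpace ℝ (Fin d))) : Set (EuclideanSpace ℝ (Fin d)) :=
  {x | ∀ c ∈ C, x + c ∈ A}

/-- The `r`-convex hull: intersection of the complements of all open balls of radius `r`
that do not meet `A`. -/
def rHull {d : ℕ} (r : ℝ) (A : Set (EuclideanSpace ℝ (Fin d))) :
    Set (EuclideanSpace ℝ (Fin d)) :=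
  ⋂ (x : EuclideanSpace ℝ (Fin d)) (_ : ball x r ∩ A = ∅), (ball x r)ᶜ

variable {d : ℕ}

lemma mSum_ball_zero (A : Set (EuclideanSpace ℝ (Fin d))) (r : ℝ) :
    mSum A (ball 0 r) = thickening r A :=
  add_ball_zero r A

lemma mem_mErode_ball_zero_iff {S : Set (EuclideanSpace ℝ (Fin d))} {r : ℝ}
    {x : EuclideanSpace ℝ (Fin d)} : x ∈ mErode S (ball 0 r) ↔ ball x r ⊆ S := by
  constructor
  · intro hx y hy
    simpa using hx (y - x) (by rwa [mem_ball_zero_iff, ← dist_eq_norm])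
  · intro hx c hc
    exact hx (by rwa [mem_ball, dist_self_add_left, ← mem_ball_zero_iff])

lemma mem_rHull_iff_ball_subset_thickening {r : ℝ} {A : Set (EuclideanSpace ℝ (Fin d))}
    {x : EuclideanSpace ℝ (Fin d)} : x ∈ rHull r A ↔ ball x r ⊆ thickening r A := by
  simp only [rHull, mem_iInter, mem_compl_iff, subset_def, mem_thickening_iff]
  refine forall_congr' fun y => ?_
  rw [mem_ball_comm, ← not_imp_not, ← not_nonempty_iff_eq_empty]
  simp only [not_not, Set.Nonempty, mem_inter_iff, mem_ball, and_comm, dist_comm y]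

theorem rHull_eq_closing_general {d : ℕ} (r : ℝ)
    (A : Set (EuclideanSpace ℝ (Fin d))) :
    rHull r A = mErode (mSum A (ball (0 : EuclideanSpace ℝ (Fin d)) r))
      (ball (0 : EuclideanSpace ℝ (Fin d)) r) := by
  ext x
  rw [mSum_ball_zero, mem_mErode_ball_zero_iff, mem_rHull_iff_ball_subset_thickening]

theorem rHull_eq_closing {d : ℕ} (r : ℝ) (hr : 0 < r)
    (A : Set (EuclideanSpace ℝ (Fin d))) (hA : IsClosed A) :
    rHull r A = mErode (mSum A (ball (0 : EuclideanSpace ℝ (Fin d)) r))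
      (ball (0 : EuclideanSpace ℝ (Fin d)) r) :=
  rHull_eq_closing_general r A
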